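/- Positivity of the homogeneous first-order well-balanced update (Lemma 3.1): let Ū_{j−1}, Ū_j, Ū_{j+1} ∈ G, let p̄^e_{j−1}, p̄^e_j, p̄^e_{j+1} > 0 and p^{e,⋆}_{j−1/2}, p^{e,⋆}_{j+1/2} > 0, and define the modified HLLC fluxes F̂_{j+1/2} = F^hllc((p^{e,⋆}_{j+1/2}/p̄^e_j) Ū_j, (p^{e,⋆}_{j+1/2}/p̄^e_{j+1}) Ū_{j+1}) and F̂_{j−1/2} = F^hllc((p^{e,⋆}_{j−1/2}/p̄^e_{j−1}) Ū_{j−1}, (p^{e,⋆}_{j−1/2}/p̄^e_j) Ū_j). If Δt > 0 and h > 0 satisfy (Δt/h) · ((p^{e,⋆}_{j+1/2} + p^{e,⋆}_{j−1/2})/p̄^e_j) · max{α_max(Ū_{j−1}), α_max(Ū_j), α_max(Ū_{j+1})} ≤ 1/2, then Ū_j − (Δt/h)(F̂_{j+1/2} − F̂_{j−1/2}) ∈ G. -/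

import Mathlib

noncomputable section

/-- A 1D state `U = (ρ, m, E)`. -/
abbrev St : Type := ℝ × ℝ × ℝ

/-- The admissible set `G = {(ρ, m, E) : ρ > 0, E − m²/(2ρ) > 0}`. -/
def admG : Set St := {U | 0 < U.1 ∧ 0 < U.2.2 - U.2.1 ^ 2 / (2 * U.1)}

/-- The velocity `u = m/ρ`. -/
def vel (U : St) : ℝ := U.2.1 / U.1

/-- The pressure `p = (γ−1)(E − m²/(2ρ))`. -/
def press (γ : ℝ) (U : St) : ℝ := (γ - 1) * (U.2.2 - U.2.1 ^ 2 / (2 * U.1))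

/-- The sound speed `√(γ p / ρ)`. -/
def sound (γ : ℝ) (U : St) : ℝ := Real.sqrt (γ * press γ U / U.1)

/-- The specific internal energy `e = (E − m²/(2ρ))/ρ`. -/
def specE (U : St) : ℝ := (U.2.2 - U.2.1 ^ 2 / (2 * U.1)) / U.1

/-- The Euler flux `F(U) = (ρu, ρu² + p, (E+p)u)`. -/
def eulerF (γ : ℝ) (U : St) : St :=
  (U.1 * vel U, U.1 * vel U ^ 2 + press γ U, (U.2.2 + press γ U) * vel U)

/-- `α₋(U) = u − √(γp/ρ)`. -/
def alphaMinus (γ : ℝ) (U : St) : ℝ := vel U - sound γ U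

/-- `α₊(U) = u + √(γp/ρ)`. -/
def alphaPlus (γ : ℝ) (U : St) : ℝ := vel U + sound γ U

/-- `α_max(U) = |u| + √(γp/ρ)`. -/
def alphaMax (γ : ℝ) (U : St) : ℝ := |vel U| + sound γ U

/-- Left wave speed `S_L = min(α₋(U_L), α₋(U_R))`. -/
def SL (γ : ℝ) (UL UR : St) : ℝ := min (alphaMinus γ UL) (alphaMinus γ UR)

/-- Right wave speed `S_R = max(α₊(U_L), α₊(U_R))`. -/
def SR (γ : ℝ) (UL UR : St) : ℝ := max (alphaPlus γ UL) (alphaPlus γ UR)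

/-- Middle wave speed `S_*`. -/
def Sstar (γ : ℝ) (UL UR : St) : ℝ :=
  (press γ UR - press γ UL + UL.1 * vel UL * (SL γ UL UR - vel UL)
      - UR.1 * vel UR * (SR γ UL UR - vel UR)) /
    (UL.1 * (SL γ UL UR - vel UL) - UR.1 * (SR γ UL UR - vel UR))

/-- HLLC intermediate state
`U_{*i} = ρ_i (S_i − u_i)/(S_i − S_*) · (1, S_*, E_i/ρ_i + (S_* − u_i)(S_* + p_i/(ρ_i(S_i − u_i))))`. -/
def Ustar (γ : ℝ) (Si Sst : ℝ) (Ui : St) : St :=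
  (Ui.1 * ((Si - vel Ui) / (Si - Sst))) •
    (((1 : ℝ), Sst,
      Ui.2.2 / Ui.1 + (Sst - vel Ui) * (Sst + press γ Ui / (Ui.1 * (Si - vel Ui)))) : St)

/-- Intermediate flux `F_{*i} = F(U_i) + S_i (U_{*i} − U_i)`. -/
def Fstar (γ : ℝ) (Si Sst : ℝ) (Ui : St) : St :=
  eulerF γ Ui + Si • (Ustar γ Si Sst Ui - Ui)

/-- The HLLC numerical flux. -/
def Fhllc (γ : ℝ) (UL UR : St) : St :=
  if 0 ≤ SL γ UL UR then eulerF γ UL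
  else if 0 ≤ Sstar γ UL UR then Fstar γ (SL γ UL UR) (Sstar γ UL UR) UL
  else if 0 ≤ SR γ UL UR then Fstar γ (SR γ UL UR) (Sstar γ UL UR) UR
  else eulerF γ UR

end

/-! The admissible set `G` is a convex cone. The HLLC flux is the flux of a Riemann fan of four
admissible states `U_L, U_{*L}, U_{*R}, U_R` separated by the speeds `S_L < S_* < S_R`; hence, when
`−1 ≤ t S_L`, the half-cell update `U_L − t (F^hllc − F(U_L))` is a convex combination of the fan
states, and symmetrically for `U_R + t (F^hllc − F(U_R))` when `t S_R ≤ 1`.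

Write `λ = Δt/h` and `c_r, c_l` for the two pressure ratios at the cell `j`. Since `F(cU) = c F(U)`,
`2(c_r + c_l)` times the update is the sum of two such half-cell updates, with
`t = 2λ(c_r + c_l)`, and of `(c_r + c_l)` times the transport step `Ū_j − 2λ(c_r − c_l) F(Ū_j)`,
which is admissible because `|σ| α_max(U) ≤ 1` implies `U − σ F(U) ∈ G`. -/

section Fan

variable {E : Type*} [AddCommGroup E] [Module ℝ E] {s : Set E} {w₀ w₁ w₂ w₃ : E}

lemma Convex.add_smul_four_mem (hs : Convex ℝ s) (h₀ : w₀ ∈ s) (h₁ : w₁ ∈ s) (h₂ : w₂ ∈ s)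
    (h₃ : w₃ ∈ s) {a₀ a₁ a₂ a₃ : ℝ} (ha₀ : 0 ≤ a₀) (ha₁ : 0 ≤ a₁) (ha₂ : 0 ≤ a₂) (ha₃ : 0 ≤ a₃)
    (hsum : a₀ + a₁ + a₂ + a₃ = 1) : a₀ • w₀ + a₁ • w₁ + a₂ • w₂ + a₃ • w₃ ∈ s := by
  have := hs.sum_mem (t := Finset.univ) (w := ![a₀, a₁, a₂, a₃]) (z := ![w₀, w₁, w₂, w₃])
    (by intro i _; fin_cases i <;> assumption) (by simpa [Fin.sum_univ_four] using hsum)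
    (by intro i _; fin_cases i <;> assumption)
  simpa [Fin.sum_univ_four] using this

lemma Convex.sub_smul_min_fan_mem (hs : Convex ℝ s) (h₀ : w₀ ∈ s) (h₁ : w₁ ∈ s) (h₂ : w₂ ∈ s)
    (h₃ : w₃ ∈ s) {t a b c : ℝ} (ht : 0 ≤ t) (hab : a ≤ b) (hbc : b ≤ c) (ha : -1 ≤ t * a) :
    w₀ - t • (min a 0 • (w₁ - w₀) + min b 0 • (w₂ - w₁) + min c 0 • (w₃ - w₂)) ∈ s := by
  convert hs.add_smul_four_mem h₀ h₁ h₂ h₃ (a₀ := 1 + t * min a 0) (a₁ := t * (min b 0 - min a 0))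
    (a₂ := t * (min c 0 - min b 0)) (a₃ := -(t * min c 0)) ?_ ?_ ?_ ?_ (by ring) using 1
  · module
  · rw [mul_min_of_nonneg _ _ ht, mul_zero]
    linarith [le_min ha neg_one_lt_zero.le]
  · exact mul_nonneg ht (sub_nonneg.2 (min_le_min_right 0 hab))
  · exact mul_nonneg ht (sub_nonneg.2 (min_le_min_right 0 hbc))
  · exact neg_nonneg.2 (mul_nonpos_of_nonneg_of_nonpos ht (min_le_right _ _))

lemma Convex.sub_smul_max_fan_mem (hs : Convex ℝ s) (h₀ : w₀ ∈ s) (h₁ : w₁ ∈ s) (h₂ : w₂ ∈ s)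
    (h₃ : w₃ ∈ s) {t a b c : ℝ} (ht : 0 ≤ t) (hab : a ≤ b) (hbc : b ≤ c) (hc : t * c ≤ 1) :
    w₃ - t • (max a 0 • (w₁ - w₀) + max b 0 • (w₂ - w₁) + max c 0 • (w₃ - w₂)) ∈ s := by
  convert hs.add_smul_four_mem h₀ h₁ h₂ h₃ (a₀ := t * max a 0) (a₁ := t * (max b 0 - max a 0))
    (a₂ := t * (max c 0 - max b 0)) (a₃ := 1 - t * max c 0) ?_ ?_ ?_ ?_ (by ring) using 1
  · module
  · exact mul_nonneg ht (le_max_right _ _)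
  · exact mul_nonneg ht (sub_nonneg.2 (max_le_max_right 0 hab))
  · exact mul_nonneg ht (sub_nonneg.2 (max_le_max_right 0 hbc))
  · rw [mul_max_of_nonneg _ _ ht, mul_zero, sub_nonneg]
    exact max_le hc zero_le_one

end Fan

lemma mem_admG_iff {U : St} : U ∈ admG ↔ 0 < U.1 ∧ U.2.1 ^ 2 < 2 * U.1 * U.2.2 := by
  refine and_congr_right fun hρ => ?_
  rw [sub_pos, div_lt_iff₀ (by positivity)]
  constructor <;> intro h <;> linarith

def admCone : ConvexCone ℝ St where
  carrier := admG
  smul_mem' c hc U hU := by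
    rw [mem_admG_iff] at hU ⊢
    simp only [Prod.smul_fst, Prod.smul_snd, smul_eq_mul]
    exact ⟨mul_pos hc hU.1, by nlinarith [mul_pos (mul_pos hc hc) (sub_pos.2 hU.2)]⟩
  add_mem' U hU V hV := by
    rw [mem_admG_iff] at hU hV ⊢
    simp only [Prod.fst_add, Prod.snd_add]
    refine ⟨add_pos hU.1 hV.1, ?_⟩
    nlinarith [sq_nonneg (U.1 * V.2.1 - V.1 * U.2.1), mul_pos (mul_pos hU.1 hU.1) (sub_pos.2 hV.2),
      mul_pos (mul_pos hV.1 hV.1) (sub_pos.2 hU.2), mul_pos hU.1 hV.1]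

lemma smul_mem_admG {c : ℝ} (hc : 0 < c) {U : St} (hU : U ∈ admG) : c • U ∈ admG :=
  admCone.smul_mem hc hU

lemma add_mem_admG {U V : St} (hU : U ∈ admG) (hV : V ∈ admG) : U + V ∈ admG :=
  admCone.add_mem hU hV

lemma smul_mem_admG_iff {c : ℝ} (hc : 0 < c) {U : St} : c • U ∈ admG ↔ U ∈ admG :=
  ⟨fun h => by simpa [hc.ne'] using smul_mem_admG (inv_pos.2 hc) h, smul_mem_admG hc⟩

lemma convex_admG : Convex ℝ admG :=
  admCone.convex

section Thermodynamics

variable {γ : ℝ} {U : St}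

lemma mom_eq_rho_mul_vel (hρ : U.1 ≠ 0) : U.2.1 = U.1 * vel U := by
  rw [vel, mul_div_cancel₀ _ hρ]

lemma two_mul_rho_mul_press (hρ : U.1 ≠ 0) :
    2 * U.1 * press γ U = (γ - 1) * (2 * U.1 * U.2.2 - U.2.1 ^ 2) := by
  rw [press]; field_simp

lemma press_pos (hγ : 1 < γ) (hU : U ∈ admG) : 0 < press γ U :=
  mul_pos (sub_pos.2 hγ) hU.2

lemma sound_pos (hγ : 1 < γ) (hU : U ∈ admG) : 0 < sound γ U :=
  Real.sqrt_pos.2 (div_pos (mul_pos (by linarith) (press_pos hγ hU)) hU.1)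

lemma rho_mul_sound_sq (hγ : 1 < γ) (hU : U ∈ admG) : U.1 * sound γ U ^ 2 = γ * press γ U := by
  rw [sound, Real.sq_sqrt (div_pos (mul_pos (by linarith) (press_pos hγ hU)) hU.1).le,
    mul_div_cancel₀ _ hU.1.ne']

lemma vel_smul {c : ℝ} (hc : c ≠ 0) (U : St) : vel (c • U) = vel U :=
  mul_div_mul_left _ _ hc

lemma press_smul (c : ℝ) (hρ : U.1 ≠ 0) : press γ (c • U) = c * press γ U := by
  rcases eq_or_ne c 0 with rfl | hc
  · simp [press]
  simp only [press, Prod.smul_fst, Prod.smul_snd, smul_eq_mul]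
  field_simp

lemma sound_smul {c : ℝ} (hc : c ≠ 0) (hρ : U.1 ≠ 0) : sound γ (c • U) = sound γ U := by
  rw [sound, sound, press_smul c hρ, Prod.smul_fst, smul_eq_mul, mul_left_comm,
    mul_div_mul_left _ _ hc]

lemma eulerF_smul (c : ℝ) (hρ : U.1 ≠ 0) : eulerF γ (c • U) = c • eulerF γ U := by
  rcases eq_or_ne c 0 with rfl | hc
  · simp [eulerF, press, vel]
  simp only [eulerF, vel_smul hc, press_smul c hρ, Prod.smul_fst, Prod.smul_snd, smul_eq_mul,
    Prod.smul_mk]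
  ext <;> dsimp only <;> ring

lemma alphaMax_nonneg : 0 ≤ alphaMax γ U :=
  add_nonneg (abs_nonneg _) (Real.sqrt_nonneg _)

lemma sub_smul_eulerF_mem_admG (hγ : 1 < γ) (hU : U ∈ admG) {σ : ℝ}
    (hσ : |σ| * alphaMax γ U ≤ 1) : U - σ • eulerF γ U ∈ admG := by
  have hρ := hU.1
  have hp := press_pos hγ hU
  have hc := sound_pos hγ hU
  have hρc := rho_mul_sound_sq hγ hU
  have hpE := two_mul_rho_mul_press (γ := γ) hρ.ne'
  have hm := mom_eq_rho_mul_vel hρ.ne'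
  set u := vel U
  set c := sound γ U
  set p := press γ U
  have hk : |σ| * c ≤ 1 - σ * u := by
    have := (le_abs_self (σ * u)).trans_eq (abs_mul σ u)
    rw [alphaMax, mul_add] at hσ
    linarith
  have hk_pos : 0 < 1 - σ * u := by
    rcases eq_or_ne σ 0 with rfl | hσ0
    · simp
    · exact (mul_pos (abs_pos.2 hσ0) hc).trans_le hk
  have hσc : σ ^ 2 * c ^ 2 ≤ (1 - σ * u) ^ 2 := by
    rw [← mul_pow, ← sq_abs, abs_mul, abs_of_pos hc]
    exact pow_le_pow_left₀ (by positivity) hk 2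
  have key : 2 * (U.1 - σ * (U.1 * u)) * (U.2.2 - σ * ((U.2.2 + p) * u))
      - (U.2.1 - σ * (U.1 * u ^ 2 + p)) ^ 2
      = (1 - σ * u) ^ 2 * (2 * U.1 * U.2.2 - U.2.1 ^ 2) - σ ^ 2 * p ^ 2 := by
    rw [hm]; ring
  rw [mem_admG_iff]
  simp only [eulerF, Prod.fst_sub, Prod.snd_sub, Prod.smul_fst, Prod.smul_snd, smul_eq_mul]
  refine ⟨by nlinarith, ?_⟩
  rw [← sub_pos, key]
  have hρK : 0 < U.1 * (1 - σ * u) ^ 2 * p := by positivity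
  have hγσ : γ * (σ ^ 2 * p ^ 2) ≤ U.1 * (1 - σ * u) ^ 2 * p := by
    calc γ * (σ ^ 2 * p ^ 2) = σ ^ 2 * c ^ 2 * (U.1 * p) := by
          linear_combination (-σ ^ 2 * p) * hρc
      _ ≤ (1 - σ * u) ^ 2 * (U.1 * p) := mul_le_mul_of_nonneg_right hσc (mul_pos hρ hp).le
      _ = U.1 * (1 - σ * u) ^ 2 * p := by ring
  have hγ1 : (γ - 1) * ((1 - σ * u) ^ 2 * (2 * U.1 * U.2.2 - U.2.1 ^ 2) - σ ^ 2 * p ^ 2)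
      = 2 * (U.1 * (1 - σ * u) ^ 2 * p) - γ * (σ ^ 2 * p ^ 2) + σ ^ 2 * p ^ 2 := by
    linear_combination (-(1 - σ * u) ^ 2) * hpE
  refine pos_of_mul_pos_right (a := γ - 1) ?_ (by linarith)
  rw [hγ1]
  linarith [sq_nonneg (σ * p), mul_pow σ p 2]

end Thermodynamics

section WaveSpeeds

lemma sound_left_le_vel_sub_SL (γ : ℝ) (UL UR : St) : sound γ UL ≤ vel UL - SL γ UL UR :=
  le_sub_comm.1 (min_le_left _ _)

lemma sound_right_le_vel_sub_SL (γ : ℝ) (UL UR : St) : sound γ UR ≤ vel UR - SL γ UL UR :=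
  le_sub_comm.1 (min_le_right _ _)

lemma sound_left_le_SR_sub_vel (γ : ℝ) (UL UR : St) : sound γ UL ≤ SR γ UL UR - vel UL :=
  le_sub_iff_add_le'.2 (le_max_left _ _)

lemma sound_right_le_SR_sub_vel (γ : ℝ) (UL UR : St) : sound γ UR ≤ SR γ UL UR - vel UR :=
  le_sub_iff_add_le'.2 (le_max_right _ _)

variable {γ : ℝ} {UL UR : St}

lemma SL_lt_vel_left (hγ : 1 < γ) (hL : UL ∈ admG) : SL γ UL UR < vel UL :=
  sub_pos.1 ((sound_pos hγ hL).trans_le (sound_left_le_vel_sub_SL γ UL UR))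

lemma vel_right_lt_SR (hγ : 1 < γ) (hR : UR ∈ admG) : vel UR < SR γ UL UR :=
  sub_pos.1 ((sound_pos hγ hR).trans_le (sound_right_le_SR_sub_vel γ UL UR))

lemma Sstar_eq (γ : ℝ) (UL UR : St) :
    Sstar γ UL UR =
      (UL.1 * (vel UL - SL γ UL UR) * vel UL + UR.1 * (SR γ UL UR - vel UR) * vel UR
          + press γ UL - press γ UR) /
        (UL.1 * (vel UL - SL γ UL UR) + UR.1 * (SR γ UL UR - vel UR)) := by
  rw [Sstar, ← neg_div_neg_eq]
  congr 1 <;> ring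

lemma Sstar_denom_pos (hγ : 1 < γ) (hL : UL ∈ admG) (hR : UR ∈ admG) :
    0 < UL.1 * (vel UL - SL γ UL UR) + UR.1 * (SR γ UL UR - vel UR) :=
  add_pos (mul_pos hL.1 (sub_pos.2 (SL_lt_vel_left hγ hL)))
    (mul_pos hR.1 (sub_pos.2 (vel_right_lt_SR hγ hR)))

lemma gamma_mul_press_le (hγ : 1 < γ) {U : St} (hU : U ∈ admG) {a b : ℝ}
    (ha : sound γ U ≤ a) (hb : sound γ U ≤ b) : γ * press γ U ≤ U.1 * (a * b) := by
  have hc := (sound_pos hγ hU).le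
  rw [← rho_mul_sound_sq hγ hU, sq]
  exact mul_le_mul_of_nonneg_left (mul_le_mul ha hb hc (hc.trans ha)) hU.1.le

lemma SL_lt_Sstar (hγ : 1 < γ) (hL : UL ∈ admG) (hR : UR ∈ admG) :
    SL γ UL UR < Sstar γ UL UR := by
  rw [Sstar_eq, lt_div_iff₀ (Sstar_denom_pos hγ hL hR)]
  have hR' := gamma_mul_press_le hγ hR (sound_right_le_vel_sub_SL γ UL UR)
    (sound_right_le_SR_sub_vel γ UL UR)
  nlinarith [mul_pos hL.1 (pow_pos (sub_pos.2 (SL_lt_vel_left hγ hL (UR := UR))) 2),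
    press_pos hγ hL, press_pos hγ hR]

lemma Sstar_lt_SR (hγ : 1 < γ) (hL : UL ∈ admG) (hR : UR ∈ admG) :
    Sstar γ UL UR < SR γ UL UR := by
  rw [Sstar_eq, div_lt_iff₀ (Sstar_denom_pos hγ hL hR)]
  have hL' := gamma_mul_press_le hγ hL (sound_left_le_vel_sub_SL γ UL UR)
    (sound_left_le_SR_sub_vel γ UL UR)
  nlinarith [mul_pos hR.1 (pow_pos (sub_pos.2 (vel_right_lt_SR hγ hR (UL := UL))) 2),
    press_pos hγ hL, press_pos hγ hR]

end WaveSpeeds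

section StarStates

variable {γ : ℝ} {U : St} {S s : ℝ}

/-- `Ustar γ S s U` is a positive multiple of `(1, s, X)`, whose internal energy `X − s²/2` is
`e + ((s − u + w)² − w²)/2` with `w = p/(ρ(S − u))`; and `w² < 2e` as soon as `|S − u| ≥ c`. -/
lemma Ustar_mem_admG (hγ : 1 < γ) (hU : U ∈ admG) (hS : sound γ U ≤ |S - vel U|)
    (hSs : 0 < (S - vel U) / (S - s)) : Ustar γ S s U ∈ admG := by
  have hρ := hU.1
  have hp := press_pos hγ hU
  have hd : γ * press γ U ≤ U.1 * (S - vel U) ^ 2 := by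
    simpa [← sq, sq_abs] using gamma_mul_press_le hγ hU hS hS
  have hd0 : S - vel U ≠ 0 := by
    rintro h; rw [h] at hd; nlinarith
  refine smul_mem_admG (mul_pos hρ hSs) ?_
  rw [mem_admG_iff]
  refine ⟨one_pos, ?_⟩
  dsimp only
  set w := press γ U / (U.1 * (S - vel U))
  have hm := mom_eq_rho_mul_vel hρ.ne'
  have hw2 : (γ - 1) * U.1 * w ^ 2 < 2 * press γ U := by
    have hwd : w * (U.1 * (S - vel U)) = press γ U := div_mul_cancel₀ _ (mul_ne_zero hρ.ne' hd0)
    refine lt_of_mul_lt_mul_right (a := U.1 * (S - vel U) ^ 2) ?_ (by positivity)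
    calc (γ - 1) * U.1 * w ^ 2 * (U.1 * (S - vel U) ^ 2) = (γ - 1) * press γ U ^ 2 := by
          rw [← hwd]; ring
      _ < 2 * press γ U * (γ * press γ U) := by nlinarith
      _ ≤ 2 * press γ U * (U.1 * (S - vel U) ^ 2) := by gcongr
  have key : (γ - 1) * U.1 * (2 * (U.2.2 / U.1 + (s - vel U) * (s + w)) - s ^ 2)
      = 2 * press γ U - (γ - 1) * U.1 * w ^ 2 + (γ - 1) * U.1 * (s - vel U + w) ^ 2 := by
    rw [press, hm]; field_simp; ring
  have hpos : 0 < (γ - 1) * U.1 * (2 * (U.2.2 / U.1 + (s - vel U) * (s + w)) - s ^ 2) := by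
    rw [key]
    have : 0 ≤ (γ - 1) * U.1 * (s - vel U + w) ^ 2 := by have := sub_pos.2 hγ; positivity
    linarith
  linarith [pos_of_mul_pos_right hpos (mul_pos (sub_pos.2 hγ) hρ).le]

lemma Fstar_sub_smul_Ustar (hρ : U.1 ≠ 0) (hSu : S - vel U ≠ 0) (hSs : S - s ≠ 0) :
    Fstar γ S s U - s • Ustar γ S s U =
      (0, press γ U + U.1 * (S - vel U) * (s - vel U),
        s * (press γ U + U.1 * (S - vel U) * (s - vel U))) := by
  have hm := mom_eq_rho_mul_vel hρ
  ext <;> simp only [Fstar, Ustar, eulerF, Prod.fst_sub, Prod.snd_sub, Prod.fst_add, Prod.snd_add,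
    Prod.smul_fst, Prod.smul_snd, smul_eq_mul, hm] <;> field_simp <;> ring

end StarStates

noncomputable abbrev UstarL (γ : ℝ) (UL UR : St) : St := Ustar γ (SL γ UL UR) (Sstar γ UL UR) UL

noncomputable abbrev UstarR (γ : ℝ) (UL UR : St) : St := Ustar γ (SR γ UL UR) (Sstar γ UL UR) UR

section HLLC

variable {γ : ℝ} {UL UR : St}

lemma UstarL_mem_admG (hγ : 1 < γ) (hL : UL ∈ admG) (hR : UR ∈ admG) :
    UstarL γ UL UR ∈ admG := by
  have hSL := SL_lt_vel_left hγ hL (UR := UR)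
  refine Ustar_mem_admG hγ hL ?_
    (div_pos_of_neg_of_neg (by linarith) (by linarith [SL_lt_Sstar hγ hL hR]))
  rw [abs_sub_comm, abs_of_pos (sub_pos.2 hSL)]
  exact sound_left_le_vel_sub_SL γ UL UR

lemma UstarR_mem_admG (hγ : 1 < γ) (hL : UL ∈ admG) (hR : UR ∈ admG) :
    UstarR γ UL UR ∈ admG := by
  have hSR := vel_right_lt_SR hγ hR (UL := UL)
  refine Ustar_mem_admG hγ hR ?_ (div_pos (by linarith) (by linarith [Sstar_lt_SR hγ hL hR]))
  rw [abs_of_pos (sub_pos.2 hSR)]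
  exact sound_right_le_SR_sub_vel γ UL UR

/-- Both star states carry the same pressure `p_* = p_i + ρ_i (S_i − u_i)(S_* − u_i)`: this is
how `S_*` is chosen. -/
lemma starPress_left_eq_right (hγ : 1 < γ) (hL : UL ∈ admG) (hR : UR ∈ admG) :
    press γ UL + UL.1 * (SL γ UL UR - vel UL) * (Sstar γ UL UR - vel UL) =
      press γ UR + UR.1 * (SR γ UL UR - vel UR) * (Sstar γ UL UR - vel UR) := by
  have h := Sstar_eq γ UL UR
  rw [eq_div_iff (Sstar_denom_pos hγ hL hR).ne'] at h
  linear_combination -h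

/-- The contact discontinuity: `F_{*R} − S_* U_{*R} = F_{*L} − S_* U_{*L} = (0, p_*, S_* p_*)`. -/
lemma Fstar_right_eq (hγ : 1 < γ) (hL : UL ∈ admG) (hR : UR ∈ admG) :
    Fstar γ (SR γ UL UR) (Sstar γ UL UR) UR =
      Fstar γ (SL γ UL UR) (Sstar γ UL UR) UL
        + Sstar γ UL UR • (UstarR γ UL UR - UstarL γ UL UR) := by
  have hSL := SL_lt_vel_left hγ hL (UR := UR)
  have hSR := vel_right_lt_SR hγ hR (UL := UL)
  have hLs := SL_lt_Sstar hγ hL hR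
  have hRs := Sstar_lt_SR hγ hL hR
  have hR' := Fstar_sub_smul_Ustar (γ := γ) (S := SR γ UL UR) (s := Sstar γ UL UR) hR.1.ne'
    (by linarith) (by linarith)
  have hL' := Fstar_sub_smul_Ustar (γ := γ) (S := SL γ UL UR) (s := Sstar γ UL UR) hL.1.ne'
    (by linarith) (by linarith)
  rw [← starPress_left_eq_right hγ hL hR] at hR'
  linear_combination (norm := module) hR' - hL'

lemma eulerF_right_eq (hγ : 1 < γ) (hL : UL ∈ admG) (hR : UR ∈ admG) :
    eulerF γ UR = eulerF γ UL + (SL γ UL UR • (UstarL γ UL UR - UL)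
      + Sstar γ UL UR • (UstarR γ UL UR - UstarL γ UL UR)
      + SR γ UL UR • (UR - UstarR γ UL UR)) := by
  have h := Fstar_right_eq hγ hL hR
  unfold Fstar at h
  linear_combination (norm := module) h

lemma Fhllc_eq_left (hγ : 1 < γ) (hL : UL ∈ admG) (hR : UR ∈ admG) :
    Fhllc γ UL UR = eulerF γ UL + (min (SL γ UL UR) 0 • (UstarL γ UL UR - UL)
      + min (Sstar γ UL UR) 0 • (UstarR γ UL UR - UstarL γ UL UR)
      + min (SR γ UL UR) 0 • (UR - UstarR γ UL UR)) := by
  have hLs := SL_lt_Sstar hγ hL hR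
  have hRs := Sstar_lt_SR hγ hL hR
  rw [Fhllc]
  split_ifs with h₁ h₂ h₃
  · rw [min_eq_right h₁, min_eq_right (h₁.trans hLs.le), min_eq_right (h₁.trans (hLs.trans hRs).le)]
    simp
  · rw [min_eq_left (not_le.1 h₁).le, min_eq_right h₂, min_eq_right (h₂.trans hRs.le)]
    simp [Fstar]
  · rw [min_eq_left (not_le.1 h₁).le, min_eq_left (not_le.1 h₂).le, min_eq_right h₃,
      Fstar_right_eq hγ hL hR]
    simp [Fstar, add_assoc]
  · rw [min_eq_left (not_le.1 h₁).le, min_eq_left (not_le.1 h₂).le, min_eq_left (not_le.1 h₃).le]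
    exact eulerF_right_eq hγ hL hR

lemma Fhllc_eq_right (hγ : 1 < γ) (hL : UL ∈ admG) (hR : UR ∈ admG) :
    Fhllc γ UL UR = eulerF γ UR - (max (SL γ UL UR) 0 • (UstarL γ UL UR - UL)
      + max (Sstar γ UL UR) 0 • (UstarR γ UL UR - UstarL γ UL UR)
      + max (SR γ UL UR) 0 • (UR - UstarR γ UL UR)) := by
  rw [Fhllc_eq_left hγ hL hR, eulerF_right_eq hγ hL hR]
  linear_combination (norm := module) min_add_max (SL γ UL UR) 0 • (UstarL γ UL UR - UL)
    + min_add_max (Sstar γ UL UR) 0 • (UstarR γ UL UR - UstarL γ UL UR)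
    + min_add_max (SR γ UL UR) 0 • (UR - UstarR γ UL UR)

lemma sub_smul_Fhllc_sub_eulerF_mem_admG (hγ : 1 < γ) (hL : UL ∈ admG) (hR : UR ∈ admG) {t : ℝ}
    (ht : 0 ≤ t) (hSL : -1 ≤ t * SL γ UL UR) : UL - t • (Fhllc γ UL UR - eulerF γ UL) ∈ admG := by
  rw [Fhllc_eq_left hγ hL hR, add_sub_cancel_left]
  exact convex_admG.sub_smul_min_fan_mem hL (UstarL_mem_admG hγ hL hR) (UstarR_mem_admG hγ hL hR)
    hR ht (SL_lt_Sstar hγ hL hR).le (Sstar_lt_SR hγ hL hR).le hSL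

lemma add_smul_Fhllc_sub_eulerF_mem_admG (hγ : 1 < γ) (hL : UL ∈ admG) (hR : UR ∈ admG) {t : ℝ}
    (ht : 0 ≤ t) (hSR : t * SR γ UL UR ≤ 1) : UR + t • (Fhllc γ UL UR - eulerF γ UR) ∈ admG := by
  rw [Fhllc_eq_right hγ hL hR, sub_sub_cancel_left, smul_neg, ← sub_eq_add_neg]
  exact convex_admG.sub_smul_max_fan_mem hL (UstarL_mem_admG hγ hL hR) (UstarR_mem_admG hγ hL hR)
    hR ht (SL_lt_Sstar hγ hL hR).le (Sstar_lt_SR hγ hL hR).le hSR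

end HLLC

section ScaledSpeeds

variable {γ A c₁ c₂ : ℝ} {U₁ U₂ : St}

lemma neg_le_SL_smul (hc₁ : c₁ ≠ 0) (hc₂ : c₂ ≠ 0) (h₁ : U₁ ∈ admG) (h₂ : U₂ ∈ admG)
    (hA₁ : alphaMax γ U₁ ≤ A) (hA₂ : alphaMax γ U₂ ≤ A) : -A ≤ SL γ (c₁ • U₁) (c₂ • U₂) := by
  simp only [SL, alphaMinus, vel_smul hc₁, vel_smul hc₂, sound_smul hc₁ h₁.1.ne',
    sound_smul hc₂ h₂.1.ne', le_min_iff]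
  unfold alphaMax at hA₁ hA₂
  constructor <;> linarith [neg_abs_le (vel U₁), neg_abs_le (vel U₂)]

lemma SR_smul_le (hc₁ : c₁ ≠ 0) (hc₂ : c₂ ≠ 0) (h₁ : U₁ ∈ admG) (h₂ : U₂ ∈ admG)
    (hA₁ : alphaMax γ U₁ ≤ A) (hA₂ : alphaMax γ U₂ ≤ A) : SR γ (c₁ • U₁) (c₂ • U₂) ≤ A := by
  simp only [SR, alphaPlus, vel_smul hc₁, vel_smul hc₂, sound_smul hc₁ h₁.1.ne',
    sound_smul hc₂ h₂.1.ne', max_le_iff]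
  unfold alphaMax at hA₁ hA₂
  constructor <;> linarith [le_abs_self (vel U₁), le_abs_self (vel U₂)]

end ScaledSpeeds

lemma sub_smul_Fhllc_sub_Fhllc_mem_admG {γ : ℝ} (hγ : 1 < γ) {U Wl Wr : St} (hU : U ∈ admG)
    (hWl : Wl ∈ admG) (hWr : Wr ∈ admG) {cl cr r : ℝ} (hcl : 0 < cl) (hcr : 0 < cr) (hr : 0 ≤ r)
    (hSL : -1 ≤ 2 * r * (cr + cl) * SL γ (cr • U) Wr)
    (hSR : 2 * r * (cr + cl) * SR γ Wl (cl • U) ≤ 1)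
    (hα : 2 * r * (cr + cl) * alphaMax γ U ≤ 1) :
    U - r • (Fhllc γ (cr • U) Wr - Fhllc γ Wl (cl • U)) ∈ admG := by
  have ht : 0 ≤ 2 * r * (cr + cl) := by positivity
  have hX := sub_smul_Fhllc_sub_eulerF_mem_admG hγ (smul_mem_admG hcr hU) hWr ht hSL
  have hY := add_smul_Fhllc_sub_eulerF_mem_admG hγ hWl (smul_mem_admG hcl hU) ht hSR
  have hZ := sub_smul_eulerF_mem_admG hγ hU (σ := 2 * r * (cr - cl)) <| by
    calc |2 * r * (cr - cl)| * alphaMax γ U ≤ 2 * r * (cr + cl) * alphaMax γ U := by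
          rw [abs_mul, abs_of_nonneg (by positivity : 0 ≤ 2 * r)]
          gcongr
          · exact alphaMax_nonneg
          · exact abs_sub_le_iff.2 ⟨by linarith, by linarith⟩
      _ ≤ 1 := hα
  rw [← smul_mem_admG_iff (by positivity : (0 : ℝ) < 2 * (cr + cl))]
  convert add_mem_admG (add_mem_admG hX hY) (smul_mem_admG (add_pos hcr hcl) hZ) using 1
  rw [eulerF_smul cr hU.1.ne', eulerF_smul cl hU.1.ne']
  module

/-- Lemma 3.1: positivity of the homogeneous first-order
well-balanced update with modified HLLC fluxes. -/
theorem first_order_homogeneous_positivity (γ : ℝ) (hγ : 1 < γ)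
    (Ujm Uj Ujp : St) (hUjm : Ujm ∈ admG) (hUj : Uj ∈ admG) (hUjp : Ujp ∈ admG)
    (pejm pej pejp : ℝ) (hpejm : 0 < pejm) (hpej : 0 < pej) (hpejp : 0 < pejp)
    (pstl pstr : ℝ) (hpstl : 0 < pstl) (hpstr : 0 < pstr)
    (Δt h : ℝ) (hΔt : 0 < Δt) (hh : 0 < h)
    (hcfl : Δt / h * ((pstr + pstl) / pej *
        max (alphaMax γ Ujm) (max (alphaMax γ Uj) (alphaMax γ Ujp))) ≤ 1 / 2) :
    Uj - (Δt / h) •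
        (Fhllc γ ((pstr / pej) • Uj) ((pstr / pejp) • Ujp)
          - Fhllc γ ((pstl / pejm) • Ujm) ((pstl / pej) • Uj)) ∈ admG := by
  set A := max (alphaMax γ Ujm) (max (alphaMax γ Uj) (alphaMax γ Ujp))
  have hAjm : alphaMax γ Ujm ≤ A := le_max_left _ _
  have hAj : alphaMax γ Uj ≤ A := (le_max_left _ _).trans (le_max_right _ _)
  have hAjp : alphaMax γ Ujp ≤ A := (le_max_right _ _).trans (le_max_right _ _)
  have hr : 0 ≤ Δt / h := div_nonneg hΔt.le hh.le
  have hcl : 0 < pstl / pej := div_pos hpstl hpej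
  have hcr : 0 < pstr / pej := div_pos hpstr hpej
  have ht : 0 ≤ 2 * (Δt / h) * (pstr / pej + pstl / pej) := by positivity
  have htA : 2 * (Δt / h) * (pstr / pej + pstl / pej) * A ≤ 1 := by
    rw [add_div] at hcfl; linarith
  refine sub_smul_Fhllc_sub_Fhllc_mem_admG hγ hUj (smul_mem_admG (div_pos hpstl hpejm) hUjm)
    (smul_mem_admG (div_pos hpstr hpejp) hUjp) hcl hcr hr ?_ ?_
    ((mul_le_mul_of_nonneg_left hAj ht).trans htA)
  · linarith [mul_le_mul_of_nonneg_left
      (neg_le_SL_smul hcr.ne' (div_pos hpstr hpejp).ne' hUj hUjp hAj hAjp) ht]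
  · linarith [mul_le_mul_of_nonneg_left
      (SR_smul_le (div_pos hpstl hpejm).ne' hcl.ne' hUjm hUj hAjm hAj) ht]
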